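/- For every finite group G there exists a finite simple graph Γ whose automorphism group is isomorphic to G (Frucht's theorem). -/

import Mathlib

open SimpleGraph

/-- The `n`-dimensional hypercube graph `Q_n` on vertex set `{0,1}^n`:
two vertices are adjacent iff they differ in exactly one coordinate. -/
def hypercube (n : ℕ) : SimpleGraph (Fin n → Bool) where
  Adj u v := hammingDist u v = 1
  symm := ⟨fun u v (h : hammingDist u v = 1) => show hammingDist v u = 1 by rwa [hammingDist_comm]⟩
  loopless := ⟨fun u (h : hammingDist u u = 1) => by simp [hammingDist_self] at h⟩

instance hypercube.adjDecidable (n : ℕ) : DecidableRel (hypercube n).Adj :=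
  fun u v => inferInstanceAs (Decidable (hammingDist u v = 1))

/-- A rotation system on a graph: a permutation of the darts preserving tails
(locally, a cyclic ordering of the darts emanating from each vertex).  A rotation
system encodes a cellular embedding of the graph into a closed orientable surface. -/
structure RotationSystem {V : Type*} (G : SimpleGraph V) where
  toPerm : Equiv.Perm G.Dart
  fst_fixed : ∀ d : G.Dart, (toPerm d).toProd.1 = d.toProd.1

/-- The involution of darts reversing directions, as a permutation. -/
def dartFlip {V : Type*} (G : SimpleGraph V) : Equiv.Perm G.Dart :=
  ⟨SimpleGraph.Dart.symm, SimpleGraph.Dart.symm,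
    SimpleGraph.Dart.symm_symm, SimpleGraph.Dart.symm_symm⟩

/-- The face-tracing permutation of a rotation system. -/
def RotationSystem.facePerm {V : Type*} {G : SimpleGraph V} (rs : RotationSystem G) :
    Equiv.Perm G.Dart :=
  rs.toPerm * dartFlip G

/-- The setoid on `α` whose classes are the cycles (orbits) of a permutation. -/
def cycleSetoid {α : Type*} (π : Equiv.Perm α) : Setoid α :=
  ⟨π.SameCycle, Equiv.Perm.SameCycle.refl π, Equiv.Perm.SameCycle.symm,
    Equiv.Perm.SameCycle.trans⟩

/-- The number of faces of the embedding described by a rotation system: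
the number of orbits of the face-tracing permutation. -/
noncomputable def RotationSystem.numFaces {V : Type*} {G : SimpleGraph V} (rs : RotationSystem G) : ℕ :=
  Nat.card (Quotient (cycleSetoid rs.facePerm))

/-- The (orientable) genus of a graph: the least `g` such that the graph admits a
cellular embedding (i.e. a rotation system) into a surface whose Euler characteristic
bookkeeping gives genus `g`, via Euler's formula `V - E + F = 2c - 2g`. -/
noncomputable def SimpleGraph.genus {V : Type*} (G : SimpleGraph V) : ℕ :=
  sInf {g : ℕ | ∃ rs : RotationSystem G,
    (Nat.card V : ℤ) - Nat.card G.edgeSet + rs.numFaces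
      = 2 * Nat.card G.ConnectedComponent - 2 * g}

/-- The automorphism group of a simple graph, as a subgroup of the permutations
of the vertex set. -/
def SimpleGraph.autGroup {V : Type*} (G : SimpleGraph V) : Subgroup (Equiv.Perm V) where
  carrier := {σ | ∀ u v : V, G.Adj (σ u) (σ v) ↔ G.Adj u v}
  one_mem' := by intro u v; rfl
  mul_mem' := by
    intro σ τ hσ hτ u v
    simpa [Equiv.Perm.mul_apply, hσ (τ u) (τ v)] using hτ u v
  inv_mem' := by
    intro σ hσ u v
    simpa using (hσ (σ⁻¹ u) (σ⁻¹ v)).symm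

/-!
Frucht's construction, with every element of `G` as a generator. There is a hub vertex for each
`g ∈ G`, and for each `g, s ∈ G` a path `g — a — b — g * s` whose inner vertices `a`, `b` are the
roots of two pendant paths ("arms") labelled `(s, false)` and `(s, true)`; arms with different
labels have different lengths. Left multiplication of `G` on the hub coordinate acts by
automorphisms. Conversely, when `G` is nontrivial, degrees separate hubs (degree `2 |G| ≥ 4`),
roots (degree 3) and the other arm vertices (degree `≤ 2`), so an automorphism maps each arm onto
an arm, which by the lengths has the same label. The induced permutation `ψ` of the hubs then
satisfies `ψ (g * s) = ψ g * s`, so the automorphism is left multiplication by `ψ 1`.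
The trivial group is the automorphism group of the empty graph.
-/

namespace SimpleGraph

variable {V W : Type*} {Γ : SimpleGraph V} {Δ : SimpleGraph W}

theorem mem_autGroup {σ : Equiv.Perm V} :
    σ ∈ Γ.autGroup ↔ ∀ u v, Γ.Adj (σ u) (σ v) ↔ Γ.Adj u v :=
  Iff.rfl

theorem Iso.encard_neighborSet (f : Γ ≃g Δ) (v : V) :
    (Δ.neighborSet (f v)).encard = (Γ.neighborSet v).encard := by
  rw [← f.image_neighborSet, f.injective.encard_image]

def isoOfMemAutGroup {σ : Equiv.Perm V} (hσ : σ ∈ Γ.autGroup) : Γ ≃g Γ :=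
  ⟨σ, fun {u v} => hσ u v⟩

theorem autGroup_eq_map_of_iso (f : Γ ≃g Δ) :
    Δ.autGroup = Γ.autGroup.map f.toEquiv.permCongrHom := by
  ext τ
  rw [Subgroup.map_equiv_eq_comap_symm, Subgroup.mem_comap, mem_autGroup, mem_autGroup]
  refine (f.toEquiv.forall_congr fun u => f.toEquiv.forall_congr fun v => ?_).symm
  exact iff_congr f.symm.map_adj_iff f.map_adj_iff.symm

def autGroupEquivOfIso (f : Γ ≃g Δ) : Γ.autGroup ≃* Δ.autGroup :=
  (MulEquiv.subgroupMap f.toEquiv.permCongrHom _).trans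
    (MulEquiv.subgroupCongr (autGroup_eq_map_of_iso f).symm)

end SimpleGraph

namespace Frucht

section

variable (G : Type*) [Finite G]

noncomputable def armLen (l : G × Bool) : ℕ := Finite.equivFin (G × Bool) l + 1

theorem armLen_injective : Function.Injective (armLen G) := fun _ _ h =>
  (Finite.equivFin (G × Bool)).injective (Fin.ext (Nat.add_right_cancel h))

/-- `(g, none)` is the hub `g`; `(g, some ⟨l, i⟩)` is vertex `i` of the arm at `g` labelled `l`,
vertex `0` being its root. -/
abbrev V : Type _ := G × Option (Σ l : G × Bool, Fin (armLen G l + 1))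

variable {G}

def hub (x : G) : V G := (x, none)

def arm (g : G) (l : G × Bool) (i : Fin (armLen G l + 1)) : V G := (g, some ⟨l, i⟩)

variable {x y g g' : G} {l l' : G × Bool} {i : Fin (armLen G l + 1)} {j : Fin (armLen G l' + 1)}

theorem eq_hub_or_arm (v : V G) : (∃ x, v = hub x) ∨ ∃ g l i, v = arm g l i := by
  obtain ⟨x, _ | ⟨l, i⟩⟩ := v
  exacts [.inl ⟨x, rfl⟩, .inr ⟨x, l, i, rfl⟩]

theorem hub_inj : hub x = hub y ↔ x = y := by simp [hub]

theorem hub_ne_arm : hub x ≠ arm g l i := by simp [hub, arm]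

theorem arm_inj : arm g l i = arm g' l' j ↔ g = g' ∧ l = l' ∧ (i : ℕ) = j := by
  constructor
  · intro h
    simp only [arm, Prod.mk.injEq, Option.some.injEq, Sigma.mk.inj_iff] at h
    obtain ⟨rfl, rfl, h⟩ := h
    exact ⟨rfl, rfl, by rw [eq_of_heq h]⟩
  · rintro ⟨rfl, rfl, h⟩
    rw [Fin.ext h]

end

variable {G : Type*} [Group G]

/-- The hub joined to the root of the arm at `g` labelled `l`. -/
def foot (g : G) (l : G × Bool) : G := cond l.2 (g * l.1) g

theorem foot_mul_left (h g : G) (l : G × Bool) : foot (h * g) l = h * foot g l := by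
  cases l with | mk s β => cases β <;> simp [foot, mul_assoc]

variable [Finite G]

def Adj : V G → V G → Prop
  | (_, none), (_, none) => False
  | (x, none), (g, some ⟨l, i⟩) | (g, some ⟨l, i⟩), (x, none) => i = 0 ∧ x = foot g l
  | (g, some ⟨l, i⟩), (g', some ⟨l', j⟩) => g = g' ∧
      (l = l' ∧ ((i : ℕ) + 1 = j ∨ (j : ℕ) + 1 = i) ∨ l.1 = l'.1 ∧ l.2 ≠ l'.2 ∧ i = 0 ∧ j = 0)

variable (G) in
def graph : SimpleGraph (V G) where
  Adj := Adj
  symm := ⟨by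
    rintro ⟨g, _ | ⟨l, i⟩⟩ ⟨g', _ | ⟨l', j⟩⟩ h <;> simp only [Adj] at h ⊢ <;> grind⟩
  loopless := ⟨by rintro ⟨g, _ | ⟨l, i⟩⟩ h <;> simp [Adj] at h⟩

section

variable {x y g g' : G} {l l' : G × Bool} {i : Fin (armLen G l + 1)} {j : Fin (armLen G l' + 1)}

theorem not_adj_hub_hub : ¬ (graph G).Adj (hub x) (hub y) := id

theorem adj_hub_arm : (graph G).Adj (hub x) (arm g l i) ↔ i = 0 ∧ x = foot g l := Iff.rfl

theorem adj_arm_arm : (graph G).Adj (arm g l i) (arm g' l' j) ↔ g = g' ∧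
    (l = l' ∧ ((i : ℕ) + 1 = j ∨ (j : ℕ) + 1 = i) ∨ l.1 = l'.1 ∧ l.2 ≠ l'.2 ∧ i = 0 ∧ j = 0) :=
  Iff.rfl

theorem four_le_encard_neighborSet_hub [Nontrivial G] (x : G) :
    4 ≤ ((graph G).neighborSet (hub x)).encard := by
  obtain ⟨t, ht⟩ := exists_ne (1 : G)
  calc (4 : ℕ∞)
      = ({arm x (1, false) 0, arm x (t, false) 0, arm x (1, true) 0,
          arm (x * t⁻¹) (t, true) 0} : Set (V G)).encard := by
        rw [Set.encard_insert_of_notMem, Set.encard_insert_of_notMem, Set.encard_pair]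
        · norm_num
        all_goals simp [arm_inj, ht.symm]
    _ ≤ _ := by
        refine Set.encard_le_encard ?_
        simp only [Set.insert_subset_iff, Set.singleton_subset_iff, mem_neighborSet,
          adj_hub_arm, foot]
        simp

theorem encard_neighborSet_arm_zero (g : G) (l : G × Bool) :
    ((graph G).neighborSet (arm g l 0)).encard = 3 := by
  have h1 : 1 < armLen G l + 1 := by simp [armLen]
  have hN : (graph G).neighborSet (arm g l 0) =
      {hub (foot g l), arm g (l.1, !l.2) 0, arm g l ⟨1, h1⟩} := by
    ext w
    obtain ⟨x, rfl⟩ | ⟨g', l', j, rfl⟩ := eq_hub_or_arm w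
    · simp [adj_comm _ (arm _ _ _), adj_hub_arm, hub_inj, hub_ne_arm]
    · simp only [mem_neighborSet, adj_arm_arm, Set.mem_insert_iff, Set.mem_singleton_iff,
        arm_inj, hub_ne_arm.symm]
      simp only [Fin.val_zero, Fin.ext_iff, Prod.ext_iff]
      grind
  rw [hN, Set.encard_insert_of_notMem, Set.encard_pair]
  · norm_num
  · simp [arm_inj]
  · simp [hub_ne_arm]

theorem encard_neighborSet_arm_le_two (hi : i ≠ 0) :
    ((graph G).neighborSet (arm g l i)).encard ≤ 2 := by
  let S : Set (Fin (armLen G l + 1)) := {j | (i : ℕ) + 1 = j ∨ (j : ℕ) + 1 = i}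
  have hN : (graph G).neighborSet (arm g l i) ⊆ arm g l '' S := by
    intro w hw
    obtain ⟨x, rfl⟩ | ⟨g', l', j, rfl⟩ := eq_hub_or_arm w
    · exact absurd (adj_hub_arm.1 hw.symm).1 hi
    · obtain ⟨rfl, ⟨rfl, hj⟩ | ⟨-, -, hi0, -⟩⟩ := adj_arm_arm.1 hw
      · exact ⟨j, hj, rfl⟩
      · exact absurd hi0 hi
  calc _ ≤ (arm g l '' S).encard := Set.encard_le_encard hN
    _ ≤ S.encard := Set.encard_image_le _ _
    _ = (Fin.val '' S).encard := (Fin.val_injective.encard_image _).symm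
    _ ≤ ({(i : ℕ) + 1, (i : ℕ) - 1} : Set ℕ).encard := by
      refine Set.encard_le_encard ?_
      rintro _ ⟨j, hj | hj, rfl⟩ <;> simp only [Set.mem_insert_iff, Set.mem_singleton_iff] <;> omega
    _ ≤ 2 := (Set.encard_insert_le _ _).trans (by norm_num)

theorem encard_neighborSet_arm_le_three (g : G) (l : G × Bool) (i : Fin (armLen G l + 1)) :
    ((graph G).neighborSet (arm g l i)).encard ≤ 3 := by
  rcases eq_or_ne i 0 with rfl | hi
  · exact (encard_neighborSet_arm_zero g l).le
  · exact (encard_neighborSet_arm_le_two hi).trans (by norm_num)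

section automorphism

variable [Nontrivial G] (e : graph G ≃g graph G)

theorem exists_map_hub (x : G) : ∃ y, e (hub x) = hub y := by
  obtain ⟨y, hy⟩ | ⟨g, l, i, hv⟩ := eq_hub_or_arm (e (hub x))
  · exact ⟨y, hy⟩
  · have h3 := encard_neighborSet_arm_le_three g l i
    rw [← hv, e.encard_neighborSet] at h3
    exact absurd ((four_le_encard_neighborSet_hub x).trans h3) (by norm_num)

theorem exists_map_arm_zero (g : G) (l : G × Bool) : ∃ g' l', e (arm g l 0) = arm g' l' 0 := by
  have h3 := encard_neighborSet_arm_zero g l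
  rw [← e.encard_neighborSet] at h3
  obtain ⟨y, hy⟩ | ⟨g', l', j, hv⟩ := eq_hub_or_arm (e (arm g l 0))
  · rw [hy] at h3
    exact absurd (four_le_encard_neighborSet_hub y) (by rw [h3]; norm_num)
  · rcases eq_or_ne j 0 with rfl | hj
    · exact ⟨g', l', hv⟩
    · rw [hv] at h3
      exact absurd (encard_neighborSet_arm_le_two hj) (by rw [h3]; norm_num)

theorem exists_map_arm_of_ne_zero (hi : i ≠ 0) :
    ∃ (g' : G) (l' : G × Bool) (j : Fin (armLen G l' + 1)),
      j ≠ 0 ∧ e (arm g l i) = arm g' l' j := by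
  have h2 := encard_neighborSet_arm_le_two (g := g) hi
  rw [← e.encard_neighborSet] at h2
  obtain ⟨y, hy⟩ | ⟨g', l', j, hv⟩ := eq_hub_or_arm (e (arm g l i))
  · rw [hy] at h2
    exact absurd ((four_le_encard_neighborSet_hub y).trans h2) (by norm_num)
  · rcases eq_or_ne j 0 with rfl | hj
    · rw [hv, encard_neighborSet_arm_zero] at h2
      exact absurd h2 (by norm_num)
    · exact ⟨g', l', j, hj, hv⟩

theorem map_arm_of_map_arm_zero (h0 : e (arm g l 0) = arm g' l' 0) (n : ℕ)
    (hn : n < armLen G l + 1) :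
    ∃ hn' : n < armLen G l' + 1, e (arm g l ⟨n, hn⟩) = arm g' l' ⟨n, hn'⟩ := by
  induction n using Nat.strong_induction_on with
  | _ n ih =>
  rcases n with _ | n
  · exact ⟨Nat.succ_pos _, h0⟩
  obtain ⟨g₂, l₂, j, hj, hv⟩ := exists_map_arm_of_ne_zero e (g := g) (i := ⟨n + 1, hn⟩)
    (by simp [Fin.ext_iff])
  obtain ⟨_, hprev⟩ := ih n (by omega) (by omega)
  have hadj : (graph G).Adj (arm g l ⟨n, by omega⟩) (arm g l ⟨n + 1, hn⟩) :=
    adj_arm_arm.2 ⟨rfl, .inl ⟨rfl, .inl rfl⟩⟩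
  rw [← e.map_adj_iff, hprev, hv, adj_arm_arm] at hadj
  obtain ⟨rfl, ⟨rfl, hnj | hjn⟩ | ⟨-, -, -, hj0⟩⟩ := hadj
  · exact ⟨hnj ▸ j.isLt, hv.trans (arm_inj.2 ⟨rfl, rfl, hnj.symm⟩)⟩
  · -- the predecessor of `arm g l n` is already the image of `arm g l (n - 1)`
    have hjn : (j : ℕ) + 1 = n := hjn
    obtain ⟨_, hpp⟩ := ih (n - 1) (by omega) (by omega)
    have := e.injective (hpp.trans ((arm_inj.2 ⟨rfl, rfl, by simp only; omega⟩).trans hv.symm))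
    simp only [arm_inj] at this
    omega
  · exact absurd hj0 hj

theorem label_eq_of_map_arm_zero (h0 : e (arm g l 0) = arm g' l' 0) : l = l' := by
  have h0' : e.symm (arm g' l' 0) = arm g l 0 := by rw [← h0, RelIso.symm_apply_apply]
  obtain ⟨hle, -⟩ := map_arm_of_map_arm_zero e h0 _ (Nat.lt_succ_self _)
  obtain ⟨hge, -⟩ := map_arm_of_map_arm_zero e.symm h0' _ (Nat.lt_succ_self _)
  exact armLen_injective G (by omega)

theorem exists_map_arm (g : G) (l : G × Bool) : ∃ g', ∀ i, e (arm g l i) = arm g' l i := by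
  obtain ⟨g', l', h0⟩ := exists_map_arm_zero e g l
  obtain rfl := label_eq_of_map_arm_zero e h0
  exact ⟨g', fun i => (map_arm_of_map_arm_zero e h0 i i.isLt).2⟩

end automorphism

end

variable (G) in
def leftMul : G →* Equiv.Perm (V G) where
  toFun h := (Equiv.mulLeft h).prodCongr (Equiv.refl _)
  map_one' := by ext <;> simp
  map_mul' _ _ := by ext <;> simp [mul_assoc]

theorem leftMul_hub (h x : G) : leftMul G h (hub x) = hub (h * x) := rfl

theorem leftMul_arm (h g : G) (l : G × Bool) (i : Fin (armLen G l + 1)) :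
    leftMul G h (arm g l i) = arm (h * g) l i := rfl

theorem leftMul_mem_autGroup (h : G) : leftMul G h ∈ (graph G).autGroup := by
  have key : ∀ (x g : G) l (i : Fin (armLen G l + 1)),
      (graph G).Adj (leftMul G h (hub x)) (leftMul G h (arm g l i)) ↔
        (graph G).Adj (hub x) (arm g l i) := by
    intro x g l i
    simp [leftMul_hub, leftMul_arm, adj_hub_arm, foot_mul_left]
  intro u v
  obtain ⟨x, rfl⟩ | ⟨g, l, i, rfl⟩ := eq_hub_or_arm u <;>
    obtain ⟨y, rfl⟩ | ⟨g', l', j, rfl⟩ := eq_hub_or_arm v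
  · exact iff_of_false not_adj_hub_hub not_adj_hub_hub
  · exact key x g' l' j
  · rw [adj_comm, key, adj_comm]
  · simp [leftMul_arm, adj_arm_arm]

theorem exists_eq_leftMul [Nontrivial G] (e : graph G ≃g graph G) : ∃ h, ⇑e = leftMul G h := by
  choose ψ hψ using exists_map_hub e
  choose κ hκ using exists_map_arm e
  have hfoot (g : G) (l : G × Bool) : ψ (foot g l) = foot (κ g l) l := by
    have hadj : (graph G).Adj (hub (foot g l)) (arm g l 0) := adj_hub_arm.2 ⟨rfl, rfl⟩
    rw [← e.map_adj_iff, hψ, hκ, adj_hub_arm] at hadj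
    exact hadj.2
  have hrung (g s : G) : κ g (s, false) = κ g (s, true) := by
    have hadj : (graph G).Adj (arm g (s, false) 0) (arm g (s, true) 0) :=
      adj_arm_arm.2 ⟨rfl, .inr ⟨rfl, by simp, rfl, rfl⟩⟩
    rw [← e.map_adj_iff, hκ, hκ, adj_arm_arm] at hadj
    exact hadj.1
  have hκψ (g : G) (l : G × Bool) : κ g l = ψ g := by
    obtain ⟨s, β⟩ := l
    have hfalse : κ g (s, false) = ψ g := (hfoot g (s, false)).symm
    cases β
    exacts [hfalse, (hrung g s).symm.trans hfalse]
  have hψ_mul (g s : G) : ψ (g * s) = ψ g * s := by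
    simpa [foot, hκψ] using hfoot g (s, true)
  refine ⟨ψ 1, funext fun v => ?_⟩
  obtain ⟨x, rfl⟩ | ⟨g, l, i, rfl⟩ := eq_hub_or_arm v
  · rw [hψ, leftMul_hub, ← hψ_mul, one_mul]
  · rw [hκ, leftMul_arm, hκψ, ← hψ_mul, one_mul]

variable (G) in
def toAutGroup : G →* (graph G).autGroup :=
  (leftMul G).codRestrict _ leftMul_mem_autGroup

theorem toAutGroup_injective : Function.Injective (toAutGroup G) := by
  intro h h' hh
  have : hub (h * 1) = hub (h' * 1) := congrArg (fun σ : (graph G).autGroup => σ.1 (hub 1)) hh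
  simpa [hub_inj] using this

theorem toAutGroup_surjective [Nontrivial G] : Function.Surjective (toAutGroup G) := by
  rintro ⟨σ, hσ⟩
  obtain ⟨h, hh⟩ := exists_eq_leftMul (isoOfMemAutGroup hσ)
  exact ⟨h, Subtype.ext (Equiv.ext (congrFun hh)).symm⟩

noncomputable def autGroupEquiv [Nontrivial G] : (graph G).autGroup ≃* G :=
  (MulEquiv.ofBijective (toAutGroup G) ⟨toAutGroup_injective, toAutGroup_surjective⟩).symm

end Frucht

/-- **Frucht's theorem.** Every finite group is isomorphic to the automorphism group of
some finite simple graph. -/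
theorem frucht (G : Type*) [Group G] [Finite G] :
    ∃ (n : ℕ) (Γ : SimpleGraph (Fin n)), Nonempty (Γ.autGroup ≃* G) := by
  rcases subsingleton_or_nontrivial G with hG | hG
  · let := uniqueOfSubsingleton (1 : G)
    let := uniqueOfSubsingleton (1 : (⊥ : SimpleGraph (Fin 0)).autGroup)
    exact ⟨0, ⊥, ⟨MulEquiv.ofUnique⟩⟩
  · let f := (Finite.equivFin (Frucht.V G)).symm
    exact ⟨_, (Frucht.graph G).comap f,
      ⟨(autGroupEquivOfIso (Iso.comap f _)).trans Frucht.autGroupEquiv⟩⟩
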